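/- Let D = (V, A) and D' = (V, A') be directed acyclic graphs with A ⊇ A'. The restriction map ρ restricts to a poset isomorphism from a lower interval of AR(D) (a set of the form {B ∈ AR(D) : B ⊆ M} for some M ∈ AR(D)) onto AR(D') if and only if D' is strongly balanced in D, i.e., for every simple cycle C of D (with either traversal direction), if all backward arcs of C belong to A', then all forward arcs of C belong to A'. -/

import Mathlib

def ArcRel {V : Type*} (E : Set (V × V)) : V → V → Prop := fun x y => (x, y) ∈ E

/-- `E` has no directed cycle. -/
def AcyclicArcs {V : Type*} (E : Set (V × V)) : Prop :=
  ∀ v : V, ¬ Relation.TransGen (ArcRel E) v v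

/-- `A` is the arc set of a directed acyclic graph: arcs join distinct vertices,
at most one direction between two vertices, and no directed cycle. -/
def IsDAG {V : Type*} (A : Set (V × V)) : Prop :=
  (∀ a ∈ A, a.1 ≠ a.2) ∧ (∀ a ∈ A, Prod.swap a ∉ A) ∧ AcyclicArcs A

/-- Arc set of the reorientation of `A` where exactly the arcs of `B` are reversed. -/
def reorient {V : Type*} (A B : Set (V × V)) : Set (V × V) :=
  (A \ B) ∪ (Prod.swap '' B)

/-- `B` encodes an acyclic reorientation of `A`. -/
def ARmem {V : Type*} (A B : Set (V × V)) : Prop :=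
  B ⊆ A ∧ AcyclicArcs (reorient A B)

/-- The acyclic reorientation poset of `A`, ordered by inclusion of reversed sets. -/
abbrev ARP {V : Type*} (A : Set (V × V)) := {B : Set (V × V) // ARmem A B}

/-- The arcs of a cyclic sequence of vertices (consecutive pairs, with wrap-around). -/
def cycleArcs {V : Type*} (p : List V) : List (V × V) := p.zip (p.rotate 1)

/-- A directed cycle with arcs in `E`: a nonempty cyclic sequence of pairwise
distinct vertices all of whose (cyclically) consecutive pairs are arcs of `E`. -/
def IsDirCycle {V : Type*} (E : Set (V × V)) (p : List V) : Prop :=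
  p ≠ [] ∧ p.Nodup ∧ ∀ a ∈ cycleArcs p, a ∈ E

/-- A simple cycle of the directed graph `A` together with a traversal direction:
a nonempty cyclic sequence of pairwise distinct vertices in which consecutive
vertices are joined by an arc of `A` in one direction or the other.  An arc
`a ∈ cycleArcs p` is *forward* if `a ∈ A` and *backward* if `Prod.swap a ∈ A`. -/
def IsUCycle {V : Type*} (A : Set (V × V)) (p : List V) : Prop :=
  p ≠ [] ∧ p.Nodup ∧ ∀ a ∈ cycleArcs p, (a ∈ A ∨ Prod.swap a ∈ A)

/-- `A'` is strongly balanced in `A`: along any simple cycle whose backward arcs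
all belong to `A'`, all forward arcs belong to `A'`. -/
def StronglyBalanced {V : Type*} (A A' : Set (V × V)) : Prop :=
  ∀ p : List V, IsUCycle A p →
    (∀ a ∈ cycleArcs p, Prod.swap a ∈ A → Prod.swap a ∈ A') →
    ∀ a ∈ cycleArcs p, a ∈ A → a ∈ A'

/-!
Both sides are equivalent to `AR(D') ⊆ AR(D)`: every acyclic reorientation of `A'` stays acyclic
when the arcs of `A \ A'` keep their orientation.

If `ρ` maps the interval below `M` isomorphically onto `AR(D')`, take `D` in that interval.
Inside `AR(D)` one can always flip a single reversed arc back, so `D` shrinks to `∅` one arc at a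
time; injectivity of `ρ` forces every flipped arc into `A'`. Hence `D ⊆ A'`, `ρ D = D`, and
surjectivity gives `AR(D') ⊆ AR(D)`. Conversely, if `AR(D') ⊆ AR(D)`, then `M = A'` works.

A reorientation `B'` of `A'` becomes cyclic on `A` only through an arc `z ∈ A \ A'` closing a walk
of arcs of `A` and reversed arcs of `A'`; shortened to a simple path, this walk and `z` form a
simple cycle that violates strong balance. Conversely, from such a cycle, reversing the arcs of
`A'` that point backwards along it gives a reorientation that is acyclic on `A'` but not on `A`.
-/

open Relation

section

variable {V : Type*}

namespace List

variable {α : Type*} {r : α → α → Prop}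

theorem isChain_iff_forall_mem_zip_tail {l : List α} :
    l.IsChain r ↔ ∀ p ∈ l.zip l.tail, r p.1 p.2 := by
  induction l using twoStepInduction <;> simp_all

theorem exists_nodup_isChain_of_reflTransGen {a b : α} (h : ReflTransGen r a b) :
    ∃ l, ∃ hl : l ≠ [], l.Nodup ∧ l.IsChain r ∧ l.head hl = a ∧ l.getLast hl = b := by
  induction h using ReflTransGen.head_induction_on with
  | refl => exact ⟨[b], by simp, by simp, .singleton _, rfl, rfl⟩
  | @head a c hac _ ih =>
    obtain ⟨l, hl, hnd, hch, rfl, rfl⟩ := ih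
    by_cases ha : a ∈ l
    · obtain ⟨s, t, rfl⟩ := append_of_mem ha
      refine ⟨a :: t, cons_ne_nil _ _, hnd.sublist (sublist_append_right _ _),
        hch.right_of_append, rfl, ?_⟩
      simp
    · refine ⟨a :: l, cons_ne_nil _ _, nodup_cons.2 ⟨ha, hnd⟩, hch.cons ?_, rfl, ?_⟩
      · obtain ⟨c, t, rfl⟩ := exists_cons_of_ne_nil hl
        simpa using hac
      · simp [getLast_cons hl]

theorem zip_tail_append_singleton (l : List α) (hl : l ≠ []) (x : α) :
    l.zip (l.tail ++ [x]) = l.zip l.tail ++ [(l.getLast hl, x)] := by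
  induction l with
  | nil => contradiction
  | cons a m ih =>
    cases m with
    | nil => simp
    | cons b m => simpa [getLast_cons] using ih (cons_ne_nil _ _)

end List

theorem cycleArcs_eq_zip_tail_append (l : List V) (hl : l ≠ []) :
    cycleArcs l = l.zip l.tail ++ [(l.getLast hl, l.head hl)] := by
  obtain ⟨a, m, rfl⟩ := List.exists_cons_of_ne_nil hl
  simpa [cycleArcs] using List.zip_tail_append_singleton (a :: m) hl a

theorem reflTransGen_of_mem_of_forall_mem_cycleArcs {E : Set (V × V)} {p : List V} (hp : p ≠ [])
    (hE : ∀ a ∈ cycleArcs p, a ∈ E) {u v : V} (hu : u ∈ p) (hv : v ∈ p) :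
    ReflTransGen (ArcRel E) u v := by
  rw [cycleArcs_eq_zip_tail_append p hp] at hE
  have hch : p.IsChain (ArcRel E) :=
    List.isChain_iff_forall_mem_zip_tail.2 fun q hq => hE q (List.mem_append_left _ hq)
  have hwrap : ArcRel E (p.getLast hp) (p.head hp) := hE _ (by simp)
  have hto_last : ReflTransGen (ArcRel E) u (p.getLast hp) :=
    hch.backwards_induction (ReflTransGen (ArcRel E) · (p.getLast hp)) p
      (fun _ _ h h' => h'.head h) (fun _ => .refl) u hu
  have hfrom_head : ReflTransGen (ArcRel E) (p.head hp) v :=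
    hch.induction (ReflTransGen (ArcRel E) (p.head hp) ·) p
      (fun _ _ h h' => h'.tail h) (fun _ => .refl) v hv
  exact hto_last.trans (hfrom_head.head hwrap)

theorem reflTransGen_iff_exists_isDirCycle {E : Set (V × V)} {z : V × V} (hz : z ∈ E) :
    ReflTransGen (ArcRel E) z.2 z.1 ↔ ∃ p, IsDirCycle E p ∧ z ∈ cycleArcs p := by
  constructor
  · intro h
    obtain ⟨l, hl, hnd, hch, hhead, hlast⟩ := List.exists_nodup_isChain_of_reflTransGen h
    have hcyc := cycleArcs_eq_zip_tail_append l hl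
    rw [hhead, hlast] at hcyc
    refine ⟨l, ⟨hl, hnd, ?_⟩, by simp [hcyc]⟩
    rw [hcyc]
    rintro a ha
    rcases List.mem_append.1 ha with ha | ha
    · exact List.isChain_iff_forall_mem_zip_tail.1 hch a ha
    · rwa [List.mem_singleton.1 ha]
  · rintro ⟨p, ⟨hp, -, hE⟩, hzp⟩
    obtain ⟨h1, h2⟩ := List.of_mem_zip hzp
    exact reflTransGen_of_mem_of_forall_mem_cycleArcs hp hE (List.mem_rotate.1 h2) h1

theorem ArcRel.mono {E E' : Set (V × V)} (h : E' ⊆ E) : ArcRel E' ≤ ArcRel E :=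
  fun _ _ hxy => h hxy

namespace AcyclicArcs

variable {E E' : Set (V × V)}

theorem mono (h : E' ⊆ E) (hE : AcyclicArcs E) : AcyclicArcs E' :=
  fun v hv => hE v (TransGen.mono (ArcRel.mono h) _ _ hv)

theorem image_swap (hE : AcyclicArcs E) : AcyclicArcs (Prod.swap '' E) := by
  intro v hv
  refine hE v (transGen_swap.1 (TransGen.mono (fun x y hxy => ?_) _ _ hv))
  simpa [ArcRel, Set.image_swap_eq_preimage_swap] using hxy

theorem of_lt {α : Type*} [Preorder α] (f : V → α) (hf : ∀ x y, (x, y) ∈ E → f x < f y) :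
    AcyclicArcs E := fun v hv => by
  have := hv.lift f hf
  rw [transGen_eq_self] at this
  exact lt_irrefl _ this

end AcyclicArcs

section Walks

variable {E : Set (V × V)}

theorem reflTransGen_or_exists_first_not_mem (E' : Set (V × V)) {a b : V}
    (h : ReflTransGen (ArcRel E) a b) :
    ReflTransGen (ArcRel E') a b ∨ ∃ z ∈ E, z ∉ E' ∧
      ReflTransGen (ArcRel E') a z.1 ∧ ReflTransGen (ArcRel E) z.2 b := by
  induction h using ReflTransGen.head_induction_on with
  | refl => exact .inl .refl
  | @head a c hac hcb ih =>
    by_cases hac' : (a, c) ∈ E'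
    · rcases ih with h | ⟨z, hz, hz', hpre, hsuf⟩
      · exact .inl (h.head hac')
      · exact .inr ⟨z, hz, hz', hpre.head hac', hsuf⟩
    · exact .inr ⟨(a, c), hac, hac', .refl, hcb⟩

theorem exists_not_mem_reflTransGen_of_not_acyclicArcs {E' : Set (V × V)} (h : E' ⊆ E)
    (hE' : AcyclicArcs E') (hE : ¬ AcyclicArcs E) :
    ∃ z ∈ E, z ∉ E' ∧ ReflTransGen (ArcRel E) z.2 z.1 := by
  obtain ⟨v, hv⟩ := not_forall_not.1 hE
  obtain ⟨c, hvc, hcv⟩ := TransGen.head'_iff.1 hv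
  by_cases hvc' : (v, c) ∈ E'
  · rcases reflTransGen_or_exists_first_not_mem E' hcv with hcv' | ⟨z, hz, hz', hpre, hsuf⟩
    · exact absurd (TransGen.head' hvc' hcv') (hE' v)
    · exact ⟨z, hz, hz', hsuf.trans ((ReflTransGen.mono (ArcRel.mono h) _ _ hpre).head hvc)⟩
  · exact ⟨(v, c), hvc, hvc', hcv⟩

theorem reflTransGen_of_not_acyclicArcs_insert {e : V × V} (hE : AcyclicArcs E)
    (h : ¬ AcyclicArcs (insert e E)) : ReflTransGen (ArcRel E) e.2 e.1 := by
  obtain ⟨z, hz, hzE, hw⟩ :=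
    exists_not_mem_reflTransGen_of_not_acyclicArcs (Set.subset_insert e E) hE h
  obtain rfl : z = e := (Set.mem_insert_iff.1 hz).resolve_right hzE
  rcases reflTransGen_or_exists_first_not_mem E hw with hw' | ⟨z', hz', hz'E, hpre, -⟩
  · exact hw'
  · obtain rfl : z' = z := (Set.mem_insert_iff.1 hz').resolve_right hz'E
    exact hpre

end Walks

noncomputable def ancestorCount (E : Set (V × V)) (x : V) : ℕ :=
  {s | ReflTransGen (ArcRel E) s x}.ncard

section AncestorCount

variable [Finite V] {E : Set (V × V)} {x y : V}

theorem ancestorCount_le_of_reflTransGen (h : ReflTransGen (ArcRel E) x y) :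
    ancestorCount E x ≤ ancestorCount E y :=
  Set.ncard_le_ncard (fun _ hs => hs.trans h) (Set.toFinite _)

theorem ancestorCount_lt_of_transGen (hE : AcyclicArcs E) (h : TransGen (ArcRel E) x y) :
    ancestorCount E x < ancestorCount E y :=
  Set.ncard_lt_ncard ((Set.ssubset_iff_of_subset fun _ hs => hs.trans h.to_reflTransGen).2
    ⟨y, .refl, fun hyx => hE y (TransGen.trans_right hyx h)⟩) (Set.toFinite _)

theorem ancestorCount_lt (hE : AcyclicArcs E) (h : (x, y) ∈ E) :
    ancestorCount E x < ancestorCount E y :=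
  ancestorCount_lt_of_transGen hE (.single h)

theorem eq_of_reflTransGen_of_ancestorCount_eq (hE : AcyclicArcs E)
    (h : ReflTransGen (ArcRel E) x y) (heq : ancestorCount E x = ancestorCount E y) : x = y := by
  rcases reflTransGen_iff_eq_or_transGen.1 h with rfl | h
  · rfl
  · exact absurd heq (ancestorCount_lt_of_transGen hE h).ne

end AncestorCount

section Reorient

variable {A A' B : Set (V × V)}

theorem mem_reorient {z : V × V} : z ∈ reorient A B ↔ (z ∈ A ∧ z ∉ B) ∨ z.swap ∈ B := by
  simp [reorient, Set.image_swap_eq_preimage_swap]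

theorem reorient_mono_left (h : A' ⊆ A) (B : Set (V × V)) : reorient A' B ⊆ reorient A B :=
  Set.union_subset_union_left _ (Set.sdiff_subset_sdiff_left h)

theorem reorient_subset_union_image_swap (hB : B ⊆ A') :
    reorient A B ⊆ A ∪ Prod.swap '' A' :=
  Set.union_subset_union Set.sdiff_subset (Set.image_mono hB)

theorem ARmem_self (hA : AcyclicArcs A) : ARmem A A :=
  ⟨subset_rfl, by simpa [reorient] using hA.image_swap⟩

theorem reorient_diff_singleton (hA : ∀ b ∈ A, b.swap ∉ A) (hB : B ⊆ A) {a : V × V}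
    (ha : a ∈ B) : reorient A (B \ {a}) = insert a (reorient A B \ {a.swap}) := by
  have haA := hB ha
  have hsA := hA a haA
  ext z
  simp only [mem_reorient, Set.mem_insert_iff, Set.mem_sdiff, Set.mem_singleton_iff]
  by_cases hza : z = a
  · subst hza; simp [haA, ha]
  · have : z.swap = a ↔ z = a.swap := ⟨fun h => h ▸ rfl, fun h => h ▸ rfl⟩
    grind

theorem ARmem.exists_diff_singleton [Finite V] (hA : IsDAG A) (hB : ARmem A B)
    (hne : B.Nonempty) : ∃ a ∈ B, ARmem A (B \ {a}) := by
  set E := reorient A B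
  set lam := ancestorCount E
  have hswap : ∀ b ∈ B, b.swap ∈ E := fun b hb => mem_reorient.2 (.inr (by simpa using hb))
  -- Flip back the reversed arc spanning the shortest `lam`-interval: a walk between its ends
  -- avoiding it would have to use a reversed arc spanning a shorter one.
  obtain ⟨a, ha, hmin⟩ :=
    Set.exists_min_image B (fun b => lam b.1 - lam b.2) (Set.toFinite _) hne
  refine ⟨a, ha, Set.sdiff_subset.trans hB.1, fun v hv => ?_⟩
  rw [reorient_diff_singleton hA.2.1 hB.1 ha] at hv
  have hF : AcyclicArcs (E \ {a.swap}) := hB.2.mono Set.sdiff_subset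
  have hwalk : ReflTransGen (ArcRel (E \ {a.swap})) a.2 a.1 :=
    reflTransGen_of_not_acyclicArcs_insert hF fun h => h v hv
  rcases reflTransGen_or_exists_first_not_mem (A \ B) hwalk with
    hAB | ⟨z, hz, hzAB, hpre, hsuf⟩
  · exact hA.2.2 a.2 (TransGen.tail' (ReflTransGen.mono (ArcRel.mono Set.sdiff_subset) _ _ hAB)
      (hB.1 ha))
  · have hzB : z.swap ∈ B := (mem_reorient.1 hz.1).resolve_left hzAB
    have hpreE : ReflTransGen (ArcRel E) a.2 z.1 :=
      ReflTransGen.mono (ArcRel.mono Set.subset_union_left) _ _ hpre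
    have hsufE : ReflTransGen (ArcRel E) z.2 a.1 :=
      ReflTransGen.mono (ArcRel.mono Set.sdiff_subset) _ _ hsuf
    have hza := hmin _ hzB
    simp only [Prod.fst_swap, Prod.snd_swap] at hza
    have heq : lam a.2 = lam z.1 ∧ lam z.2 = lam a.1 := by
      have : lam a.2 ≤ lam z.1 := ancestorCount_le_of_reflTransGen hpreE
      have : lam z.2 ≤ lam a.1 := ancestorCount_le_of_reflTransGen hsufE
      have : lam z.1 < lam z.2 := ancestorCount_lt hB.2 hz.1
      have : lam a.2 < lam a.1 := ancestorCount_lt hB.2 (hswap a ha)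
      omega
    exact hz.2 (Prod.ext (eq_of_reflTransGen_of_ancestorCount_eq hB.2 hpreE heq.1).symm
      (eq_of_reflTransGen_of_ancestorCount_eq hB.2 hsufE heq.2))

end Reorient

section StronglyBalanced

variable {A A' : Set (V × V)}

theorem stronglyBalanced_iff_forall_isDirCycle (hA : ∀ a ∈ A, a.swap ∉ A) (hsub : A' ⊆ A) :
    StronglyBalanced A A' ↔
      ∀ p, IsDirCycle (A ∪ Prod.swap '' A') p → ∀ a ∈ cycleArcs p, a ∈ A → a ∈ A' := by
  have hmixed : ∀ a : V × V, a ∈ A ∪ Prod.swap '' A' ↔ a ∈ A ∨ a.swap ∈ A' := by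
    simp [Set.image_swap_eq_preimage_swap]
  constructor
  · rintro hSB p ⟨hp, hnd, hE⟩
    refine hSB p ⟨hp, hnd, fun a ha => ?_⟩ fun a ha hsA => ?_
    · exact ((hmixed a).1 (hE a ha)).imp_right (hsub ·)
    · exact ((hmixed a).1 (hE a ha)).resolve_left (hA a · hsA)
  · rintro h p ⟨hp, hnd, hU⟩ hback
    exact h p ⟨hp, hnd, fun a ha => (hmixed a).2 ((hU a ha).imp_right (hback a ha))⟩

theorem stronglyBalanced_iff_forall_not_reflTransGen (hA : ∀ a ∈ A, a.swap ∉ A)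
    (hsub : A' ⊆ A) :
    StronglyBalanced A A' ↔
      ∀ z ∈ A, z ∉ A' → ¬ ReflTransGen (ArcRel (A ∪ Prod.swap '' A')) z.2 z.1 := by
  rw [stronglyBalanced_iff_forall_isDirCycle hA hsub]
  constructor
  · intro h z hz hz' hw
    obtain ⟨p, hp, hzp⟩ := (reflTransGen_iff_exists_isDirCycle (Or.inl hz)).1 hw
    exact hz' (h p hp z hzp hz)
  · intro h p hp a ha haA
    by_contra haA'
    exact h a haA haA' ((reflTransGen_iff_exists_isDirCycle (Or.inl haA)).2 ⟨p, hp, ha⟩)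

theorem ARmem_of_forall_not_reflTransGen (hsub : A' ⊆ A)
    (h : ∀ z ∈ A, z ∉ A' → ¬ ReflTransGen (ArcRel (A ∪ Prod.swap '' A')) z.2 z.1)
    {B' : Set (V × V)} (hB' : ARmem A' B') : ARmem A B' := by
  refine ⟨hB'.1.trans hsub, by_contra fun hcyc => ?_⟩
  obtain ⟨z, hz, hz', hw⟩ :=
    exists_not_mem_reflTransGen_of_not_acyclicArcs (reorient_mono_left hsub B') hB'.2 hcyc
  obtain ⟨hzA, hzB'⟩ : z ∈ A ∧ z ∉ B' :=
    (mem_reorient.1 hz).resolve_right fun h => hz' (mem_reorient.2 (.inr h))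
  exact h z hzA (fun hzA' => hz' (mem_reorient.2 (.inl ⟨hzA', hzB'⟩)))
    (ReflTransGen.mono (ArcRel.mono (reorient_subset_union_image_swap hB'.1)) _ _ hw)

theorem acyclicArcs_reorient_sep_lt [Finite V] (hA' : AcyclicArcs A') {α : Type*}
    [LinearOrder α] (f : V → α) : AcyclicArcs (reorient A' {b ∈ A' | f b.2 < f b.1}) := by
  refine AcyclicArcs.of_lt (fun x => toLex (f x, ancestorCount A' x)) fun x y hxy => ?_
  rw [Prod.Lex.lt_iff]
  rcases mem_reorient.1 hxy with ⟨hxyA', hxyB'⟩ | ⟨-, hlt⟩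
  · have hle : f x ≤ f y := not_lt.1 fun hlt => hxyB' ⟨hxyA', hlt⟩
    exact hle.lt_or_eq.imp id fun heq => ⟨heq, ancestorCount_lt hA' hxyA'⟩
  · exact .inl hlt

theorem mem_reorient_sep_lt {α : Type*} [LinearOrder α] (f : V → α) {x y : V}
    (hxy : (x, y) ∈ A ∪ Prod.swap '' A') (hlt : f x < f y) :
    (x, y) ∈ reorient A {b ∈ A' | f b.2 < f b.1} := by
  rw [mem_reorient]
  rcases hxy with hxyA | hyxA'
  · exact .inl ⟨hxyA, fun h => lt_asymm hlt h.2⟩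
  · rw [Set.image_swap_eq_preimage_swap] at hyxA'
    exact .inr ⟨hyxA', hlt⟩

theorem exists_ARmem_not_ARmem [Finite V] (hA' : AcyclicArcs A') {z : V × V} (hz : z ∈ A)
    (hz' : z ∉ A') (hw : ReflTransGen (ArcRel (A ∪ Prod.swap '' A')) z.2 z.1) :
    ∃ B', ARmem A' B' ∧ ¬ ARmem A B' := by
  classical
  obtain ⟨l, hl, hnd, hch, hhead, hlast⟩ := List.exists_nodup_isChain_of_reflTransGen hw
  let B' := {b ∈ A' | l.idxOf b.2 < l.idxOf b.1}
  refine ⟨B', ⟨Set.sep_subset _ _, acyclicArcs_reorient_sep_lt hA' l.idxOf⟩, fun hB' => ?_⟩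
  have hpath : l.IsChain (ArcRel (reorient A B')) := by
    rw [List.isChain_iff_getElem] at hch ⊢
    intro i hi
    refine mem_reorient_sep_lt l.idxOf (hch i hi) ?_
    rw [hnd.idxOf_getElem, hnd.idxOf_getElem]
    exact i.lt_succ_self
  have hw' := List.relationReflTransGen_of_exists_isChain l hpath hl
  rw [hhead, hlast] at hw'
  exact hB'.2 _ (TransGen.tail' hw' (mem_reorient.2 (.inl ⟨hz, fun h => hz' h.1⟩)))

theorem forall_ARmem_iff_forall_not_reflTransGen [Finite V] (hA' : AcyclicArcs A')
    (hsub : A' ⊆ A) :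
    (∀ B', ARmem A' B' → ARmem A B') ↔
      ∀ z ∈ A, z ∉ A' → ¬ ReflTransGen (ArcRel (A ∪ Prod.swap '' A')) z.2 z.1 := by
  refine ⟨fun h z hz hz' hw => ?_, fun h _ => ARmem_of_forall_not_reflTransGen hsub h⟩
  obtain ⟨B', hB', hnot⟩ := exists_ARmem_not_ARmem hA' hz hz' hw
  exact hnot (h B' hB')

end StronglyBalanced

section LowerInterval

variable [Finite V] {A A' M : Set (V × V)}

theorem subset_of_injOn_inter (hA : IsDAG A)
    (hinj : Set.InjOn (· ∩ A') {B | ARmem A B ∧ B ⊆ M}) {D : Set (V × V)} (hD : ARmem A D)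
    (hDM : D ⊆ M) : D ⊆ A' := by
  induction D using WellFoundedLT.induction with
  | _ D ih =>
  rcases D.eq_empty_or_nonempty with rfl | hne
  · exact Set.empty_subset _
  obtain ⟨a, ha, hDa⟩ := hD.exists_diff_singleton hA hne
  have hDaM : D \ {a} ⊆ M := Set.sdiff_subset.trans hDM
  have hssub : D \ {a} ⊂ D := Set.sdiff_singleton_ssubset.2 ha
  have haA' : a ∈ A' := by
    by_contra haA'
    refine hssub.ne (hinj ⟨hDa, hDaM⟩ ⟨hD, hDM⟩ ?_)
    change (D \ {a}) ∩ A' = D ∩ A'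
    rw [← Set.inter_sdiff_right_comm]
    exact Set.sdiff_singleton_eq_self fun h => haA' h.2
  intro x hx
  by_cases hxa : x = a
  · exact hxa ▸ haA'
  · exact ih _ hssub hDa hDaM ⟨hx, hxa⟩

theorem exists_lowerInterval_iff (hA : IsDAG A) (hA' : AcyclicArcs A') (hsub : A' ⊆ A) :
    (∃ M, ARmem A M ∧
      (∀ B, ARmem A B → B ⊆ M → ARmem A' (B ∩ A')) ∧
      (∀ B', ARmem A' B' → ∃ B, ARmem A B ∧ B ⊆ M ∧ B ∩ A' = B') ∧
      (∀ B C, ARmem A B → B ⊆ M → ARmem A C → C ⊆ M →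
        (B ⊆ C ↔ B ∩ A' ⊆ C ∩ A'))) ↔ ∀ B', ARmem A' B' → ARmem A B' := by
  constructor
  · rintro ⟨M, -, -, hsurj, hord⟩ B' hB'
    obtain ⟨D, hD, hDM, rfl⟩ := hsurj B' hB'
    have hinj : Set.InjOn (· ∩ A') {B | ARmem A B ∧ B ⊆ M} := fun B hB C hC h =>
      ((hord B C hB.1 hB.2 hC.1 hC.2).2 h.le).antisymm ((hord C B hC.1 hC.2 hB.1 hB.2).2 h.ge)
    rwa [Set.inter_eq_left.2 (subset_of_injOn_inter hA hinj hD hDM)]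
  · intro h
    refine ⟨A', h A' (ARmem_self hA'), fun B hB hBA' => ?_,
      fun B' hB' => ⟨B', h B' hB', hB'.1, Set.inter_eq_left.2 hB'.1⟩,
      fun B C _ hB _ hC => by rw [Set.inter_eq_left.2 hB, Set.inter_eq_left.2 hC]⟩
    rw [Set.inter_eq_left.2 hBA']
    exact ⟨hBA', hB.2.mono (reorient_mono_left hsub B)⟩

end LowerInterval

end

/-- The restriction map restricts to a poset isomorphism from a
lower interval of `AR(D)` onto `AR(D')` if and only if `A'` is strongly balanced
in `A`. -/
theorem stmt_7 {V : Type*} [Fintype V] (A A' : Set (V × V)) (hA : IsDAG A)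
    (hA' : IsDAG A') (hsub : A' ⊆ A) :
    (∃ M, ARmem A M ∧
      (∀ B, ARmem A B → B ⊆ M → ARmem A' (B ∩ A')) ∧
      (∀ B', ARmem A' B' → ∃ B, ARmem A B ∧ B ⊆ M ∧ B ∩ A' = B') ∧
      (∀ B C, ARmem A B → B ⊆ M → ARmem A C → C ⊆ M →
        (B ⊆ C ↔ B ∩ A' ⊆ C ∩ A'))) ↔ StronglyBalanced A A' :=
  (exists_lowerInterval_iff hA hA'.2.2 hsub).trans <|
    (forall_ARmem_iff_forall_not_reflTransGen hA'.2.2 hsub).trans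
      (stronglyBalanced_iff_forall_not_reflTransGen hA.2.1 hsub).symm
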